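/- arXiv:2310.19083 — 7 statements merged into one kernel-verified Lean document; each statement's English description precedes it below -/
import Mathlib

section
/- Let n ∈ ℕ, let A be a real n×n matrix, let t ∈ ℝ, and let X, Z_W, Z_U ⊆ ℝⁿ be arbitrary sets. Then for every x₀ ∈ ℝⁿ: x₀ lies in the image of (X ⊖ Z_W) + (−Z_U) under the matrix exponential exp(−t·A) (acting by matrix–vector multiplication) if and only if there exists z_u ∈ Z_U such that for every z_w ∈ Z_W, exp(t·A)·x₀ + z_u + z_w ∈ X. (This is the set-theoretic content of Proposition 5: the time-point EA backward reachable set satisfies BRS_EA(−t) = e^{−At}((X_end ⊖ Z_W(t)) ⊕ −Z_U(t)).) -/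
open Pointwise Matrix

lemma exp_mul_cancel (n : ℕ) (A : Matrix (Fin n) (Fin n) ℝ) (t : ℝ) :
    NormedSpace.exp (t • A) * NormedSpace.exp ((-t) • A) = 1 := by
  have h : Commute (t • A) ((-t) • A) := by
    simp [Commute, SemiconjBy, Matrix.smul_mul, Matrix.mul_smul]
  rw [(Matrix.exp_add_of_commute (t • A) ((-t) • A) h).symm, ← add_smul]
  simp

/-- Proposition 5 (time-point EA backward reachable set):
`BRS_EA(-t) = e^{-At}((X ⊖ Z_W) ⊕ -Z_U)`, stated pointwise. -/
theorem stmt_1 (n : ℕ) (A : Matrix (Fin n) (Fin n) ℝ) (t : ℝ)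
    (X ZW ZU : Set (Fin n → ℝ)) (x₀ : Fin n → ℝ) :
    x₀ ∈ (fun y => (NormedSpace.exp ((-t) • A)) *ᵥ y) ''
        ({x | ∀ zw ∈ ZW, x + zw ∈ X} + (-ZU)) ↔
      ∃ zu ∈ ZU, ∀ zw ∈ ZW,
        (NormedSpace.exp (t • A)) *ᵥ x₀ + zu + zw ∈ X := by
  have hc : NormedSpace.exp (t • A) * NormedSpace.exp ((-t) • A) = 1 :=
    exp_mul_cancel n A t
  have hc' : NormedSpace.exp ((-t) • A) * NormedSpace.exp (t • A) = 1 := by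
    have := exp_mul_cancel n A (-t); simpa using this
  constructor
  · rintro ⟨y, ⟨p, hp, q, hq, rfl⟩, rfl⟩
    rw [Set.mem_neg] at hq
    refine ⟨-q, hq, fun zw hzw => ?_⟩
    have : NormedSpace.exp (t • A) *ᵥ (NormedSpace.exp ((-t) • A) *ᵥ (p + q))
        = p + q := by
      rw [Matrix.mulVec_mulVec, hc, Matrix.one_mulVec]
    rw [this]
    have h2 : p + q + -q + zw = p + zw := by abel
    rw [h2]
    exact hp zw hzw
  · rintro ⟨zu, hzu, h⟩
    refine ⟨NormedSpace.exp (t • A) *ᵥ x₀ + zu + -zu,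
      ⟨NormedSpace.exp (t • A) *ᵥ x₀ + zu, fun zw hzw => h zw hzw,
        -zu, Set.mem_neg.mpr (by simpa using hzu), rfl⟩, ?_⟩
    have h3 : NormedSpace.exp (t • A) *ᵥ x₀ + zu + -zu
        = NormedSpace.exp (t • A) *ᵥ x₀ := by abel
    simp only [h3]
    show NormedSpace.exp ((-t) • A) *ᵥ (NormedSpace.exp (t • A) *ᵥ x₀) = x₀
    rw [Matrix.mulVec_mulVec, hc', Matrix.one_mulVec]
end

section
/- (Lemma 1, distributivity of the Minkowski difference over the convex hull.) Let S₁, S₂, S₃ ⊆ ℝⁿ be compact, convex, and nonempty sets. Then convexHull ℝ ((S₁ ⊖ S₃) ∪ (S₂ ⊖ S₃)) ⊆ (convexHull ℝ (S₁ ∪ S₂)) ⊖ S₃. -/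
open Pointwise

/-- Lemma 1: distributivity of the Minkowski difference over the convex hull:
`conv(S₁ ⊖ S₃, S₂ ⊖ S₃) ⊆ conv(S₁, S₂) ⊖ S₃` for compact, convex, nonempty sets. -/
theorem stmt_3 (n : ℕ) (S₁ S₂ S₃ : Set (Fin n → ℝ))
    (h₁c : IsCompact S₁) (h₁v : Convex ℝ S₁) (h₁n : S₁.Nonempty)
    (h₂c : IsCompact S₂) (h₂v : Convex ℝ S₂) (h₂n : S₂.Nonempty)
    (h₃c : IsCompact S₃) (h₃v : Convex ℝ S₃) (h₃n : S₃.Nonempty) :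
    convexHull ℝ ({x | ∀ s ∈ S₃, x + s ∈ S₁} ∪ {x | ∀ s ∈ S₃, x + s ∈ S₂}) ⊆
      {x | ∀ s ∈ S₃, x + s ∈ convexHull ℝ (S₁ ∪ S₂)} := by
  apply convexHull_min
  · rintro x (hx | hx) s hs
    · exact subset_convexHull ℝ _ (Set.mem_union_left _ (hx s hs))
    · exact subset_convexHull ℝ _ (Set.mem_union_right _ (hx s hs))
  · intro x hx y hy a b ha hb hab s hs
    have : (a • x + b • y) + s = a • (x + s) + b • (y + s) := by
      have h : a • s + b • s = s := by rw [← add_smul, hab, one_smul]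
      rw [smul_add, smul_add, add_add_add_comm, h]
    rw [this]
    exact (convex_convexHull ℝ _) (hx s hs) (hy s hs) ha hb hab
end

section
/- (Intermediate claim in the proof of Lemma 1.) Let S₁, S₂, S₃ ⊆ ℝⁿ be arbitrary sets. Then convexHull ℝ ((S₁ ⊖ S₃) ∪ (S₂ ⊖ S₃)) + S₃ ⊆ convexHull ℝ (S₁ ∪ S₂); that is, adding S₃ (Minkowski sum) to the convex hull of the two Minkowski differences stays inside the convex hull of S₁ ∪ S₂. -/
open Pointwise

/-- Intermediate claim in the proof of Lemma 1:
`conv((S₁ ⊖ S₃) ∪ (S₂ ⊖ S₃)) ⊕ S₃ ⊆ conv(S₁ ∪ S₂)` for arbitrary sets. -/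
theorem stmt_4 (n : ℕ) (S₁ S₂ S₃ : Set (Fin n → ℝ)) :
    convexHull ℝ ({x | ∀ s ∈ S₃, x + s ∈ S₁} ∪ {x | ∀ s ∈ S₃, x + s ∈ S₂}) + S₃ ⊆
      convexHull ℝ (S₁ ∪ S₂) := by
  rintro z ⟨x, hx, s, hs, rfl⟩
  have h1 : ({x | ∀ s ∈ S₃, x + s ∈ S₁} ∪ {x | ∀ s ∈ S₃, x + s ∈ S₂})
      ⊆ {y | y + s ∈ S₁ ∪ S₂} := by
    rintro y (hy | hy)
    · exact Or.inl (hy s hs)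
    · exact Or.inr (hy s hs)
  have hx' : x ∈ convexHull ℝ {y | y + s ∈ S₁ ∪ S₂} := convexHull_mono h1 hx
  have h2 : {y | y + s ∈ S₁ ∪ S₂} + {s} ⊆ S₁ ∪ S₂ := by
    rintro z ⟨y, hy, t, ht, rfl⟩
    rw [Set.mem_singleton_iff] at ht
    subst ht
    exact hy
  have : x + s ∈ convexHull ℝ {y | y + s ∈ S₁ ∪ S₂} + convexHull ℝ {s} := by
    exact ⟨x, hx', s, subset_convexHull ℝ _ rfl, rfl⟩
  rw [← convexHull_add] at this
  exact convexHull_mono h2 this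
end

section
/- (Soundness of the outer approximation of the AE time-point backward reachable set, combining Proposition 3 with derivation (31).) Let A be a real n×n matrix, t ∈ ℝ, and let X, Z_W, Ẑ_W, Z_U, Ž_U ⊆ ℝⁿ with Z_W ⊆ Ẑ_W and Ž_U ⊆ Z_U. Then {x₀ ∈ ℝⁿ | ∀ z_u ∈ Z_U, ∃ z_w ∈ Z_W, exp(t·A)·x₀ + z_u + z_w ∈ X} ⊆ image under exp(−t·A) of ((X + (−Ẑ_W)) ⊖ Ž_U); that is, every initial state from which the target set is unavoidable lies in the computed outer approximation. -/
open Pointwise Matrix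

/-- Soundness of the outer approximation of the AE time-point backward
reachable set (Proposition 3 combined with derivation (31)): every initial
state from which the target set is unavoidable lies in
`e^{-At}((X ⊕ -Ẑ_W) ⊖ Ž_U)`. -/
theorem stmt_13 (n : ℕ) (A : Matrix (Fin n) (Fin n) ℝ) (t : ℝ)
    (X ZW ZWhat ZU ZUcheck : Set (Fin n → ℝ))
    (hW : ZW ⊆ ZWhat) (hU : ZUcheck ⊆ ZU) :
    {x₀ | ∀ zu ∈ ZU, ∃ zw ∈ ZW,
        (NormedSpace.exp (t • A)) *ᵥ x₀ + zu + zw ∈ X} ⊆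
      (fun y => (NormedSpace.exp ((-t) • A)) *ᵥ y) ''
        {x | ∀ zu ∈ ZUcheck, x + zu ∈ X + (-ZWhat)} := by
  intro x₀ hx₀
  refine ⟨NormedSpace.exp (t • A) *ᵥ x₀, ?_, ?_⟩
  · intro zu hzu
    obtain ⟨zw, hzw, hmem⟩ := hx₀ zu (hU hzu)
    have : NormedSpace.exp (t • A) *ᵥ x₀ + zu =
        (NormedSpace.exp (t • A) *ᵥ x₀ + zu + zw) + (-zw) := by abel
    rw [this]
    exact Set.add_mem_add hmem (Set.neg_mem_neg.mpr (hW hzw))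
  · have hcomm : Commute ((-t) • A) (t • A) := by
      apply Commute.smul_left; apply Commute.smul_right; exact Commute.refl A
    have h1 : NormedSpace.exp ((-t) • A) * NormedSpace.exp (t • A) = 1 := by
      rw [← Matrix.exp_add_of_commute _ _ hcomm]
      have : (-t) • A + t • A = 0 := by simp [neg_smul]
      rw [this, NormedSpace.exp_zero]
    simp only [Matrix.mulVec_mulVec, ← neg_smul, h1, Matrix.one_mulVec]
end

section
/- (Soundness of the inner approximation of the EA time-point backward reachable set, combining Proposition 5 with derivation (41).) Let A be a real n×n matrix, t ∈ ℝ, and let X, Z_W, Ẑ_W, Z_U, Ž_U ⊆ ℝⁿ with Z_W ⊆ Ẑ_W and Ž_U ⊆ Z_U. Then the image under exp(−t·A) of (X ⊖ Ẑ_W) + (−Ž_U) is contained in {x₀ ∈ ℝⁿ | ∃ z_u ∈ Z_U, ∀ z_w ∈ Z_W, exp(t·A)·x₀ + z_u + z_w ∈ X}; that is, from every initial state in the computed inner approximation the target set can be reached despite worst-case disturbances. -/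
open Pointwise Matrix

/-- Soundness of the inner approximation of the EA time-point backward
reachable set (Proposition 5 combined with derivation (41)): from every
initial state in `e^{-At}((X ⊖ Ẑ_W) ⊕ -Ž_U)` the target set can be reached
despite worst-case disturbances. -/
theorem stmt_14 (n : ℕ) (A : Matrix (Fin n) (Fin n) ℝ) (t : ℝ)
    (X ZW ZWhat ZU ZUcheck : Set (Fin n → ℝ))
    (hW : ZW ⊆ ZWhat) (hU : ZUcheck ⊆ ZU) :
    (fun y => (NormedSpace.exp ((-t) • A)) *ᵥ y) ''
        ({x | ∀ zw ∈ ZWhat, x + zw ∈ X} + (-ZUcheck)) ⊆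
      {x₀ | ∃ zu ∈ ZU, ∀ zw ∈ ZW,
        (NormedSpace.exp (t • A)) *ᵥ x₀ + zu + zw ∈ X} := by
  rintro x₀ ⟨y, ⟨p, hp, z, hz, rfl⟩, rfl⟩
  rw [Set.mem_neg] at hz
  refine ⟨-z, hU hz, fun zw hzw => ?_⟩
  have hinv : (NormedSpace.exp (t • A)) * (NormedSpace.exp ((-t) • A)) = 1 := by
    rw [← Matrix.exp_add_of_commute]
    · simp
    · rw [neg_smul]; exact (Commute.refl (t • A)).neg_right
  have hy : (NormedSpace.exp (t • A)) *ᵥ ((NormedSpace.exp ((-t) • A)) *ᵥ (p + z))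
      = p + z := by
    rw [Matrix.mulVec_mulVec, hinv, Matrix.one_mulVec]
  rw [hy]
  have : p + z + -z + zw = p + zw := by abel
  rw [this]
  exact hp zw (hW hzw)
end

section
/- (Minkowski difference of a polytope and a compact set, Equation (14).) Let P = {x ∈ ℝⁿ | ∀ j ∈ Fin v, ⟨a j, x⟩ ≤ b j} be a polytope given by vectors a : Fin v → ℝⁿ and bounds b : Fin v → ℝ, and let S ⊆ ℝⁿ be nonempty and compact. Then P ⊖ S = {x ∈ ℝⁿ | ∀ j ∈ Fin v, ⟨a j, x⟩ ≤ b j − sSup {⟨a j, s⟩ | s ∈ S}}; that is, the Minkowski difference is obtained exactly by tightening each halfspace offset by the support function of S in the corresponding normal direction. -/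
open Pointwise Matrix

/-- Equation (14): Minkowski difference of a polytope in halfspace
representation and a nonempty compact set, computed by tightening each
halfspace offset by the corresponding support function value. -/
theorem stmt_17 (n v : ℕ) (a : Fin v → (Fin n → ℝ)) (b : Fin v → ℝ)
    (S : Set (Fin n → ℝ)) (hSne : S.Nonempty) (hSc : IsCompact S) :
    {x | ∀ s ∈ S, x + s ∈ {y : Fin n → ℝ | ∀ j : Fin v, a j ⬝ᵥ y ≤ b j}} =
      {x | ∀ j : Fin v, a j ⬝ᵥ x ≤ b j - sSup {r | ∃ s ∈ S, r = a j ⬝ᵥ s}} := by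
  have hcont : ∀ j : Fin v, Continuous (fun y : Fin n → ℝ => a j ⬝ᵥ y) := by
    intro j
    simp only [dotProduct]
    exact continuous_finset_sum _ fun i _ => (continuous_const.mul (continuous_apply i))
  have himg : ∀ j : Fin v, {r | ∃ s ∈ S, r = a j ⬝ᵥ s} = (fun y => a j ⬝ᵥ y) '' S := by
    intro j; ext r; simp [Set.mem_image, eq_comm]
  have hbdd : ∀ j : Fin v, BddAbove {r | ∃ s ∈ S, r = a j ⬝ᵥ s} := by
    intro j; rw [himg j]
    exact (hSc.image (hcont j)).bddAbove
  have hne : ∀ j : Fin v, {r | ∃ s ∈ S, r = a j ⬝ᵥ s}.Nonempty := by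
    intro j; obtain ⟨s, hs⟩ := hSne; exact ⟨a j ⬝ᵥ s, s, hs, rfl⟩
  ext x
  simp only [Set.mem_setOf_eq]
  constructor
  · intro h j
    have : b j - a j ⬝ᵥ x ∈ upperBounds {r | ∃ s ∈ S, r = a j ⬝ᵥ s} := by
      rintro r ⟨s, hs, rfl⟩
      have := h s hs j
      rw [dotProduct_add] at this
      linarith
    have := csSup_le (hne j) this
    linarith
  · intro h s hs j
    have h1 := h j
    have h2 : a j ⬝ᵥ s ≤ sSup {r | ∃ s ∈ S, r = a j ⬝ᵥ s} :=
      le_csSup (hbdd j) ⟨s, hs, rfl⟩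
    rw [dotProduct_add]
    linarith
end

section
/- (Enclosure of the product of an interval matrix with a zonotope, Equation (17).) Let L, U be real n×n matrices with L ≤ U entrywise, and let Z = {c + ∑_{i ∈ Fin γ} α i • G i | ∀ i, α i ∈ [−1,1]} be a zonotope in ℝⁿ with center c and generators G : Fin γ → ℝⁿ. Set M_c := (1/2)(L + U), M_r := (1/2)(U − L), and ν ∈ ℝⁿ with ν_k := |c_k| + ∑_{i ∈ Fin γ} |(G i)_k| for each coordinate k. Then for every matrix M with L ≤ M ≤ U entrywise and every z ∈ Z, the vector M·z lies in the zonotope with center M_c·c and generators consisting of the vectors M_c·(G i) for i ∈ Fin γ together with the n vectors (M_r·ν)_k · e_k (where e_k is the k-th standard basis vector); i.e. {M·z | L ≤ M ≤ U, z ∈ Z} is contained in this zonotope. -/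
open Matrix

/-- Equation (17): enclosure of the product of an interval matrix `[L,U]` with
a zonotope `⟨c,G⟩` by the zonotope with center `M_c c` and generators
`M_c G i` together with the axis-aligned generators `(M_r ν)_k • e_k`. -/
theorem stmt_19 (n γ : ℕ) (L U : Matrix (Fin n) (Fin n) ℝ)
    (hLU : ∀ i j, L i j ≤ U i j) (c : Fin n → ℝ) (G : Fin γ → (Fin n → ℝ))
    (Mc Mr : Matrix (Fin n) (Fin n) ℝ) (ν : Fin n → ℝ)
    (hMc : Mc = (1/2 : ℝ) • (L + U)) (hMr : Mr = (1/2 : ℝ) • (U - L))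
    (hν : ∀ k, ν k = |c k| + ∑ i, |G i k|) :
    {y | ∃ M : Matrix (Fin n) (Fin n) ℝ,
        (∀ i j, L i j ≤ M i j) ∧ (∀ i j, M i j ≤ U i j) ∧
        ∃ z ∈ {x | ∃ α : Fin γ → ℝ,
            (∀ i, α i ∈ Set.Icc (-1 : ℝ) 1) ∧ x = c + ∑ i, α i • G i},
          y = M *ᵥ z} ⊆
      {y | ∃ α : Fin γ → ℝ, ∃ β : Fin n → ℝ,
        (∀ i, α i ∈ Set.Icc (-1 : ℝ) 1) ∧ (∀ k, β k ∈ Set.Icc (-1 : ℝ) 1) ∧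
        y = Mc *ᵥ c + ∑ i, α i • (Mc *ᵥ G i)
            + ∑ k, β k • (((Mr *ᵥ ν) k) • (Pi.single k 1 : Fin n → ℝ))} := by
  rintro y ⟨M, hL, hU, z, ⟨α, hα, hz⟩, rfl⟩
  set v := Mr *ᵥ ν with hv
  -- entrywise bound |M - Mc| ≤ Mr
  have hMMc : ∀ k j, |M k j - Mc k j| ≤ Mr k j := by
    intro k j
    rw [hMc, hMr]
    simp only [Matrix.smul_apply, Matrix.add_apply, Matrix.sub_apply, smul_eq_mul]
    rw [abs_le]
    constructor <;> [linarith [hL k j]; linarith [hU k j]]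
  -- coordinatewise bound |z j| ≤ ν j
  have hzb : ∀ j, |z j| ≤ ν j := by
    intro j
    rw [hz, hν]
    simp only [Pi.add_apply, Finset.sum_apply, Pi.smul_apply, smul_eq_mul]
    refine (abs_add_le _ _).trans ?_
    gcongr
    refine (Finset.abs_sum_le_sum_abs _ _).trans ?_
    apply Finset.sum_le_sum
    intro i _
    rw [abs_mul]
    have h1 : |α i| ≤ 1 := abs_le.mpr ⟨(hα i).1, (hα i).2⟩
    nlinarith [abs_nonneg (G i j), abs_nonneg (α i)]
  -- defect bound
  have hd : ∀ k, |(M *ᵥ z) k - (Mc *ᵥ z) k| ≤ v k := by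
    intro k
    have : (M *ᵥ z) k - (Mc *ᵥ z) k = ∑ j, (M k j - Mc k j) * z j := by
      simp [Matrix.mulVec, dotProduct, ← Finset.sum_sub_distrib, sub_mul]
    rw [this, hv]
    refine (Finset.abs_sum_le_sum_abs _ _).trans ?_
    simp only [Matrix.mulVec, dotProduct]
    apply Finset.sum_le_sum
    intro j _
    rw [abs_mul]
    have h1 := hMMc k j
    have h2 := hzb j
    have h3 : (0:ℝ) ≤ |M k j - Mc k j| := abs_nonneg _
    have h4 : (0:ℝ) ≤ |z j| := abs_nonneg _
    nlinarith
  have hvnn : ∀ k, 0 ≤ v k := fun k => (abs_nonneg _).trans (hd k)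
  refine ⟨α, fun k => if v k = 0 then 0 else ((M *ᵥ z) k - (Mc *ᵥ z) k) / v k,
    hα, ?_, ?_⟩
  · intro k
    dsimp only
    by_cases h : v k = 0
    · simp [h]
    · rw [Set.mem_Icc, ← abs_le, if_neg h, abs_div, abs_of_nonneg (hvnn k)]
      rw [div_le_one (lt_of_le_of_ne (hvnn k) (Ne.symm h))]
      exact hd k
  · have hMcz : Mc *ᵥ z = Mc *ᵥ c + ∑ i, α i • (Mc *ᵥ G i) := by
      rw [hz]
      rw [Matrix.mulVec_add]
      congr 1
      rw [show (Mc *ᵥ ∑ i, α i • G i) = Mc.mulVecLin (∑ i, α i • G i) from rfl,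
        map_sum]
      simp [Matrix.mulVecLin_apply, Matrix.mulVec_smul]
    funext k
    have hsum : (∑ k', (if v k' = 0 then (0:ℝ) else ((M *ᵥ z) k' - (Mc *ᵥ z) k') / v k')
        • (v k' • (Pi.single k' 1 : Fin n → ℝ))) k
        = (M *ᵥ z) k - (Mc *ᵥ z) k := by
      rw [Finset.sum_apply]
      simp only [Pi.smul_apply, smul_eq_mul]
      rw [Finset.sum_eq_single k]
      · by_cases h : v k = 0
        · have : |(M *ᵥ z) k - (Mc *ᵥ z) k| ≤ 0 := by rw [← h]; exact hd k
          have h0 : (M *ᵥ z) k - (Mc *ᵥ z) k = 0 := by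
            have := abs_nonneg ((M *ᵥ z) k - (Mc *ᵥ z) k)
            have := abs_eq_zero.mp (le_antisymm ‹_› ‹_›)
            exact this
          simp [h, h0]
        · rw [if_neg h]
          simp [Pi.single_apply]
          field_simp
      · intro b _ hb
        simp [Pi.single_apply, Ne.symm hb]
      · simp
    rw [← hMcz] at *
    simp only [Pi.add_apply]
    rw [hsum]
    ring
end
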